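/- arXiv:1708.01175 — 4 statements merged into one kernel-verified Lean document; each statement's English description precedes it below -/
import Mathlib

section
/- Let F_q ⊆ F_{q^a} be an extension of finite fields of odd characteristic and u ∈ F_{q^a}^*. Then the discriminant of the Scharlau trace form Tr_{F_{q^a}/F_q}(⟨u⟩) is a square in F_q if and only if (a is odd and u is a square in F_{q^a}) or (a is even and u is a nonsquare in F_{q^a}). -/
/-!
The Gram matrix of `(x, y) ↦ Tr(u x y)` in the basis `b` is `(matrix of x ↦ u x)ᵀ` times the trace
matrix of `b`, so its determinant is `N(u) · disc(b)`, and the square class is the product of the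
two square classes.

By Euler's criterion, `N(u) = u ^ ((Q - 1) / (q - 1))` is a square in `F` iff `u` is a square in
`K`. For the other factor, list the Galois group as `Frob ^ 0, …, Frob ^ (a - 1)`: then
`disc(b) = w²` with `w = det (Frob ^ j (bᵢ))`. Applying `Frob` rotates the columns cyclically, so
`Frob w = (-1) ^ (a - 1) w`. Since `disc(b)` is a square in `F` iff `w ∈ F`, i.e. iff `Frob w = w`,
this happens iff `a` is odd.
-/

open Matrix Module

theorem isSquare_iff_mem_range_of_algebraMap_eq_sq {F K : Type*} [Field F] [Field K]
    [Algebra F K] {d : F} {w : K} (h : algebraMap F K d = w ^ 2) :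
    IsSquare d ↔ w ∈ Set.range (algebraMap F K) := by
  constructor
  · rintro ⟨c, rfl⟩
    rw [map_mul, ← sq, sq_eq_sq_iff_eq_or_eq_neg] at h
    rcases h with h | h
    · exact ⟨c, h⟩
    · exact ⟨-c, by rw [map_neg, h, neg_neg]⟩
  · rintro ⟨c, rfl⟩
    exact ⟨c, (algebraMap F K).injective (by rw [h, map_mul, sq])⟩

namespace Algebra

theorem leftMulMatrix_transpose_mul_traceMatrix {A B ι : Type*} [CommRing A] [CommRing B]
    [Algebra A B] [Fintype ι] [DecidableEq ι] (b : Basis ι A B) (u : B) :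
    (leftMulMatrix b u)ᵀ * traceMatrix A b = of fun i j => trace A B (u * b i * b j) := by
  ext i j
  have hu : u * b i = ∑ k, leftMulMatrix b u k i • b k := by
    simp_rw [leftMulMatrix_eq_repr_mul, b.sum_repr]
  simp only [of_apply, hu, Finset.sum_mul, map_sum, smul_mul_assoc, map_smul, smul_eq_mul,
    mul_apply, transpose_apply, traceMatrix_apply, traceForm_apply]

theorem det_of_trace_mul_mul {A B ι : Type*} [CommRing A] [CommRing B] [Algebra A B]
    [Fintype ι] [DecidableEq ι] (b : Basis ι A B) (u : B) :
    (of fun i j => trace A B (u * b i * b j)).det = norm A u * discr A b := by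
  rw [← leftMulMatrix_transpose_mul_traceMatrix, det_mul, det_transpose, norm_eq_matrix_det b,
    discr_def]

variable {K L ι : Type*} [Field K] [Field L] [Algebra K L] [Fintype ι]

variable (K) in
def automorphismsMatrix (b : ι → L) (e : ι ≃ Gal(L/K)) : Matrix ι ι L :=
  of fun i j => e j (b i)

theorem traceMatrix_map_eq_automorphismsMatrix_mul_transpose [FiniteDimensional K L]
    [IsGalois K L] (b : ι → L) (e : ι ≃ Gal(L/K)) :
    (traceMatrix K b).map (algebraMap K L) =
      automorphismsMatrix K b e * (automorphismsMatrix K b e)ᵀ := by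
  ext i k
  simp only [map_apply, traceMatrix_apply, traceForm_apply, trace_eq_sum_automorphisms, mul_apply,
    automorphismsMatrix, transpose_apply, of_apply, ← map_mul]
  exact (e.sum_comp fun σ => σ (b i * b k)).symm

theorem algebraMap_discr_eq_det_automorphismsMatrix_sq [DecidableEq ι] [FiniteDimensional K L]
    [IsGalois K L] (b : ι → L) (e : ι ≃ Gal(L/K)) :
    algebraMap K L (discr K b) = (automorphismsMatrix K b e).det ^ 2 := by
  rw [discr_def, RingHom.map_det, RingHom.mapMatrix_apply,
    traceMatrix_map_eq_automorphismsMatrix_mul_transpose b e, det_mul, det_transpose, sq]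

end Algebra

namespace FiniteField

variable {F K : Type*} [Field F] [Fintype F] [Field K] [Algebra F K]

theorem isSquare_mul_iff {x y : F} (hx : x ≠ 0) (hy : y ≠ 0) :
    IsSquare (x * y) ↔ (IsSquare x ↔ IsSquare y) := by
  classical
  rw [← quadraticChar_one_iff_isSquare (mul_ne_zero hx hy), ← quadraticChar_one_iff_isSquare hx,
    ← quadraticChar_one_iff_isSquare hy, map_mul]
  rcases quadraticChar_dichotomy hx with h | h <;>
    rcases quadraticChar_dichotomy hy with h' | h' <;> simp [h, h']

theorem isSquare_norm_iff [Fintype K] (hF : ringChar F ≠ 2) {x : K} (hx : x ≠ 0) :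
    IsSquare (Algebra.norm F x) ↔ IsSquare x := by
  have hK : ringChar K ≠ 2 := Algebra.ringChar_eq F K ▸ hF
  set q := Fintype.card F
  have hq : q % 2 = 1 := odd_card_of_char_ne_two hF
  have hQ : Fintype.card K % 2 = 1 := odd_card_of_char_ne_two hK
  have hexp : (Fintype.card K - 1) / (q - 1) * (q / 2) = Fintype.card K / 2 := by
    obtain ⟨k, hk⟩ : q - 1 ∣ Fintype.card K - 1 := by
      rw [card_eq_pow_finrank (K := F)]
      exact Nat.sub_one_dvd_pow_sub_one q (finrank F K)
    have hq1 : 1 < q := Fintype.one_lt_card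
    rw [hk, Nat.mul_div_cancel_left k (by omega)]
    rw [show q - 1 = 2 * (q / 2) by omega, mul_assoc, mul_comm (q / 2)] at hk
    omega
  rw [isSquare_iff hF (Algebra.norm_ne_zero_iff.mpr hx), isSquare_iff hK hx,
    ← (algebraMap F K).injective.eq_iff, map_pow, map_one, algebraMap_norm_eq_pow, ← pow_mul,
    Nat.card_eq_fintype_card, Nat.card_eq_fintype_card, hexp]

theorem mem_range_algebraMap_iff_frobenius_apply_eq [Finite K] (x : K) :
    x ∈ Set.range (algebraMap F K) ↔ frobeniusAlgEquivOfAlgebraic F K x = x := by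
  rw [IsGalois.mem_range_algebraMap_iff_fixed]
  refine ⟨fun h => h _, fun h σ => ?_⟩
  obtain ⟨n, rfl⟩ := (bijective_frobeniusAlgEquivOfAlgebraic_pow F K).2 σ
  rw [AlgEquiv.coe_pow]
  exact Function.iterate_fixed h n

variable (F K) in
noncomputable def frobeniusPowEquiv [Finite K] : Fin (finrank F K) ≃ Gal(K/F) :=
  Equiv.ofBijective _ (bijective_frobeniusAlgEquivOfAlgebraic_pow F K)

theorem frobenius_mul_frobeniusPowEquiv [Finite K] (n : Fin (finrank F K)) :
    frobeniusAlgEquivOfAlgebraic F K * frobeniusPowEquiv F K n =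
      frobeniusPowEquiv F K (finRotate _ n) := by
  have := n.neZero
  simp only [frobeniusPowEquiv, Equiv.ofBijective_apply, finRotate_apply]
  rw [← pow_succ', ← pow_mod_orderOf, orderOf_frobeniusAlgEquivOfAlgebraic, Fin.val_add,
    Fin.val_one', Nat.add_mod_mod]

variable {ι : Type*} [Fintype ι] [DecidableEq ι]

theorem frobenius_det_automorphismsMatrix [Finite K] (b : ι → K) (e : ι ≃ Fin (finrank F K)) :
    frobeniusAlgEquivOfAlgebraic F K
        (Algebra.automorphismsMatrix F b (e.trans (frobeniusPowEquiv F K))).det =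
      (-1) ^ (finrank F K - 1) *
        (Algebra.automorphismsMatrix F b (e.trans (frobeniusPowEquiv F K))).det := by
  set M := Algebra.automorphismsMatrix F b (e.trans (frobeniusPowEquiv F K))
  have hM : (frobeniusAlgEquivOfAlgebraic F K : K →+* K).mapMatrix M =
      M.submatrix id ((e.trans (finRotate _)).trans e.symm) := by
    ext i j
    simp only [M, Algebra.automorphismsMatrix, RingHom.mapMatrix_apply, map_apply, submatrix_apply,
      of_apply, Equiv.trans_apply, Equiv.apply_symm_apply, id_eq, ← frobenius_mul_frobeniusPowEquiv]
    rfl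
  change (frobeniusAlgEquivOfAlgebraic F K : K →+* K) M.det = _
  have hsign := Equiv.Perm.sign_symm_trans_trans (finRotate _) e.symm
  rw [Equiv.symm_symm] at hsign
  rw [RingHom.map_det, hM, det_permute', hsign, sign_finRotate]
  simp

theorem isSquare_discr_iff [Finite K] (hF : ringChar F ≠ 2) (b : Basis ι F K) :
    IsSquare (Algebra.discr F b) ↔ Odd (finrank F K) := by
  have hK : ringChar K ≠ 2 := Algebra.ringChar_eq F K ▸ hF
  let e : ι ≃ Fin (finrank F K) := Fintype.equivFinOfCardEq (finrank_eq_card_basis b).symm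
  set w := (Algebra.automorphismsMatrix F b (e.trans (frobeniusPowEquiv F K))).det
  have hw : algebraMap F K (Algebra.discr F b) = w ^ 2 :=
    Algebra.algebraMap_discr_eq_det_automorphismsMatrix_sq b _
  have hw0 : w ≠ 0 := by
    intro h
    apply Algebra.discr_not_zero_of_basis F b
    rw [← map_eq_zero_iff _ (algebraMap F K).injective, hw, h, zero_pow two_ne_zero]
  rw [isSquare_iff_mem_range_of_algebraMap_eq_sq hw, mem_range_algebraMap_iff_frobenius_apply_eq,
    frobenius_det_automorphismsMatrix, mul_eq_right₀ hw0,
    neg_one_pow_eq_one_iff_even (Ring.neg_one_ne_one_of_char_ne_two hK)]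
  rw [Nat.even_sub finrank_pos, ← Nat.not_even_iff_odd]
  simp

end FiniteField

/-- Let `F ⊆ K` be an extension of finite fields of odd characteristic, of degree
`a = [K : F]`, and `u ∈ Kˣ`.  The discriminant of the Scharlau trace form
`Tr_{K/F}(⟨u⟩)`, i.e. the determinant of the Gram matrix
`(Tr_{K/F}(u · bᵢ · bⱼ))` in any `F`-basis `b` of `K`, is a square in `F`
iff (`a` is odd and `u` is a square in `K`) or (`a` is even and `u` is a
nonsquare in `K`). -/
theorem stmt4 (F K : Type) [Field F] [Field K] [Fintype F] [Fintype K] [Algebra F K]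
    (hodd : ringChar F ≠ 2) (u : Kˣ)
    (ι : Type) [Fintype ι] [DecidableEq ι] (b : Module.Basis ι F K) :
    IsSquare (Matrix.det (Matrix.of fun i j : ι =>
        Algebra.trace F K ((u : K) * b i * b j))) ↔
      ((Odd (Module.finrank F K) ∧ IsSquare (u : K)) ∨
        (Even (Module.finrank F K) ∧ ¬ IsSquare (u : K))) := by
  rw [Algebra.det_of_trace_mul_mul,
    FiniteField.isSquare_mul_iff (Algebra.norm_ne_zero_iff.mpr u.ne_zero)
      (Algebra.discr_not_zero_of_basis F b),
    FiniteField.isSquare_norm_iff hodd u.ne_zero, FiniteField.isSquare_discr_iff hodd b]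
  rcases Nat.even_or_odd (finrank F K) with h | h
  · simp [h, Nat.not_odd_iff_even.mpr h]
  · simp [h, Nat.not_even_iff_odd.mpr h]
end

section
/- Let F_q ⊆ F_{q^a} be an extension of finite fields of odd characteristic, with primitive element x generating F_{q^a} over F_q. The discriminant of the trace form Tr_{F_{q^a}/F_q}(⟨1⟩) is a square in F_q if and only if a is odd. -/
/-!
Write `q = #F` and `a = [K : F]`. Over `K` the Gram matrix of the trace form factors as `M Mᵀ`,
where `M = (bᵢ ^ q ^ k)` is the Moore matrix of the basis, so its determinant `d` satisfies
`d = (det M)²` in `K`. Frobenius `y ↦ y ^ q` shifts the columns of `M` cyclically, hence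
`(det M) ^ q = (-1) ^ (a - 1) det M`. Thus `d ^ ((q - 1) / 2) = (det M) ^ (q - 1) = (-1) ^ (a - 1)`,
and Euler's criterion finishes.
-/

open Matrix

def mooreMatrix {R ι : Type*} [Monoid R] (q n : ℕ) (b : ι → R) : Matrix ι (Fin n) R :=
  of fun i k => b i ^ q ^ (k : ℕ)

theorem mooreMatrix_map_pow_eq_submatrix_finRotate {R ι : Type*} [Monoid R] {q n : ℕ}
    {b : ι → R} (hb : ∀ i, b i ^ q ^ n = b i) :
    (mooreMatrix q n b).map (· ^ q) = (mooreMatrix q n b).submatrix id (finRotate n) := by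
  ext i k
  obtain ⟨m, rfl⟩ : ∃ m, n = m + 1 := ⟨n - 1, (Nat.sub_one_add_one k.pos.ne').symm⟩
  simp only [mooreMatrix, map_apply, submatrix_apply, of_apply, id_eq, ← pow_mul, ← pow_succ,
    coe_finRotate]
  split_ifs with hk
  · rw [hk, Fin.val_last, hb, pow_zero, pow_one]
  · rfl

namespace FiniteField

variable {F K : Type*} [Field F] [Fintype F] [Field K] [Fintype K] [Algebra F K]

theorem traceMatrix_map_eq_mooreMatrix_mul_transpose {ι : Type*} (b : ι → K) :
    (Algebra.traceMatrix F b).map (algebraMap F K) =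
      mooreMatrix (Fintype.card F) (Module.finrank F K) b *
        (mooreMatrix (Fintype.card F) (Module.finrank F K) b)ᵀ := by
  ext i j
  simp only [map_apply, Algebra.traceMatrix_apply, Algebra.traceForm_apply,
    algebraMap_trace_eq_sum_pow, Nat.card_eq_fintype_card, mul_apply, transpose_apply,
    mooreMatrix, of_apply, mul_pow]
  exact (Fin.sum_univ_eq_sum_range (fun k => b i ^ Fintype.card F ^ k * b j ^ Fintype.card F ^ k)
    _).symm

theorem algebraMap_discr_eq_det_mooreMatrix_sq (b : Fin (Module.finrank F K) → K) :
    algebraMap F K (Algebra.discr F b) =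
      (mooreMatrix (Fintype.card F) (Module.finrank F K) b).det ^ 2 := by
  rw [Algebra.discr_def, RingHom.map_det, RingHom.mapMatrix_apply,
    traceMatrix_map_eq_mooreMatrix_mul_transpose, det_mul, det_transpose, sq]

theorem det_mooreMatrix_pow_card (b : Fin (Module.finrank F K) → K) :
    (mooreMatrix (Fintype.card F) (Module.finrank F K) b).det ^ Fintype.card F =
      (-1) ^ (Module.finrank F K - 1) *
        (mooreMatrix (Fintype.card F) (Module.finrank F K) b).det := by
  have hb : ∀ i, b i ^ Fintype.card F ^ Module.finrank F K = b i := fun i => by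
    rw [← Module.card_eq_pow_finrank, pow_card]
  calc _ = frobeniusAlgHom F K (mooreMatrix _ _ b).det := rfl
    _ = ((mooreMatrix _ _ b).submatrix id (finRotate _)).det := by
      rw [AlgHom.map_det]
      exact congrArg det (mooreMatrix_map_pow_eq_submatrix_finRotate hb)
    _ = _ := by rw [det_permute', sign_finRotate]; push_cast; rfl

theorem discr_pow_card_div_two (hF : ringChar F ≠ 2)
    (b : Module.Basis (Fin (Module.finrank F K)) F K) :
    Algebra.discr F b ^ (Fintype.card F / 2) = (-1) ^ (Module.finrank F K - 1) := by
  set D := (mooreMatrix (Fintype.card F) (Module.finrank F K) b).det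
  have hsq : algebraMap F K (Algebra.discr F b) = D ^ 2 :=
    algebraMap_discr_eq_det_mooreMatrix_sq b
  have hD : D ≠ 0 := by
    rintro hD
    rw [hD, zero_pow two_ne_zero, map_eq_zero_iff _ (algebraMap F K).injective] at hsq
    exact Algebra.discr_not_zero_of_basis F b hsq
  have hD1 : D ^ (Fintype.card F - 1) = (-1) ^ (Module.finrank F K - 1) := by
    refine mul_right_cancel₀ hD ?_
    rw [← pow_succ, Nat.sub_add_cancel Fintype.card_pos, det_mooreMatrix_pow_card]
  apply (algebraMap F K).injective
  rw [map_pow, hsq, ← pow_mul, Nat.two_mul_odd_div_two (odd_card_of_char_ne_two hF), hD1,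
    map_pow, map_neg, map_one]

theorem isSquare_discr_iff_odd_finrank (hF : ringChar F ≠ 2) {ι : Type*} [Fintype ι]
    [DecidableEq ι] (b : Module.Basis ι F K) :
    IsSquare (Algebra.discr F b) ↔ Odd (Module.finrank F K) := by
  let b' := b.reindex (b.indexEquiv (Module.finBasis F K))
  have hb' : Algebra.discr F b' = Algebra.discr F b := by
    rw [Module.Basis.coe_reindex, Algebra.discr_reindex]
  rw [← hb', isSquare_iff hF (Algebra.discr_not_zero_of_basis F b'), discr_pow_card_div_two hF,
    neg_one_pow_eq_one_iff_even (Ring.neg_one_ne_one_of_char_ne_two hF),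
    Nat.even_sub' Module.finrank_pos]
  simp

end FiniteField

theorem stmt6_general (F K : Type) [Field F] [Field K] [Fintype F] [Fintype K] [Algebra F K]
    (hodd : ringChar F ≠ 2)
    (ι : Type) [Fintype ι] [DecidableEq ι] (b : Module.Basis ι F K) :
    IsSquare (Matrix.det (Matrix.of fun i j : ι => Algebra.trace F K (b i * b j))) ↔
      Odd (Module.finrank F K) :=
  FiniteField.isSquare_discr_iff_odd_finrank hodd b

/-- Let `F ⊆ K` be an extension of finite fields of odd characteristic with a primitive
element `x` (so `K = F(x)`).  The discriminant of the trace form `Tr_{K/F}(⟨1⟩)`, i.e.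
the determinant of the Gram matrix `(Tr_{K/F}(bᵢ bⱼ))` in any `F`-basis `b` of `K`,
is a square in `F` iff the degree `a = [K : F]` is odd. -/
theorem stmt6 (F K : Type) [Field F] [Field K] [Fintype F] [Fintype K] [Algebra F K]
    (hodd : ringChar F ≠ 2) (x : K) (hx : Algebra.adjoin F ({x} : Set K) = ⊤)
    (ι : Type) [Fintype ι] [DecidableEq ι] (b : Module.Basis ι F K) :
    IsSquare (Matrix.det (Matrix.of fun i j : ι => Algebra.trace F K (b i * b j))) ↔
      Odd (Module.finrank F K) :=
  stmt6_general F K hodd ι b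
end

section
/- Let R be a Noetherian local ring with maximal ideal p, and let f₁,…,f_r, g₁,…,g_r ∈ R satisfy g_i - f_i ∈ p^{m+1} for all i, where m is such that p^m ⊆ ⟨f₁,…,f_r⟩. Then ⟨g₁,…,g_r⟩ = ⟨f₁,…,f_r⟩ as ideals of R. -/
/-- Let `R` be a Noetherian local ring with maximal ideal `p`, and let
`f₁,…,f_r, g₁,…,g_r ∈ R` satisfy `gᵢ - fᵢ ∈ p^(m+1)` for all `i`, where `m` is such that
`p^m ⊆ ⟨f₁,…,f_r⟩`.  Then `⟨g₁,…,g_r⟩ = ⟨f₁,…,f_r⟩` as ideals of `R`. -/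
theorem stmt10 (R : Type) [CommRing R] [IsNoetherianRing R] [IsLocalRing R]
    (r m : ℕ) (f g : Fin r → R)
    (hm : (IsLocalRing.maximalIdeal R) ^ m ≤ Ideal.span (Set.range f))
    (hg : ∀ i, g i - f i ∈ (IsLocalRing.maximalIdeal R) ^ (m + 1)) :
    Ideal.span (Set.range g) = Ideal.span (Set.range f) := by
  set p := IsLocalRing.maximalIdeal R
  have hpm1 : p ^ (m + 1) ≤ p • Ideal.span (Set.range f) := by
    rw [pow_succ']
    exact Ideal.mul_mono le_rfl hm
  have hgf : Ideal.span (Set.range g) ≤ Ideal.span (Set.range f) := by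
    rw [Ideal.span_le]
    rintro _ ⟨i, rfl⟩
    have : g i = f i + (g i - f i) := by ring
    rw [this]
    exact Ideal.add_mem _ (Ideal.subset_span ⟨i, rfl⟩)
      (hm (Ideal.pow_le_pow_right (Nat.le_succ m) (hg i)))
  have hfg : Ideal.span (Set.range f) ≤
      Ideal.span (Set.range g) ⊔ p • Ideal.span (Set.range f) := by
    rw [Ideal.span_le]
    rintro _ ⟨i, rfl⟩
    have : f i = g i - (g i - f i) := by ring
    rw [this]
    exact Submodule.sub_mem _
      (Ideal.mem_sup_left (Ideal.subset_span ⟨i, rfl⟩))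
      (Ideal.mem_sup_right (hpm1 (hg i)))
  refine le_antisymm hgf ?_
  exact Submodule.le_of_le_smul_of_le_jacobson_bot
    (IsNoetherian.noetherian _)
    (IsLocalRing.maximalIdeal_le_jacobson ⊥) hfg
end

section
/- Let σ: A^r_k → A^r_k be given by coordinate functions f_i = Σ_j a_{ij} x_j with a_{ij} ∈ k[x₁,…,x_r], and suppose the origin is an isolated zero of σ. Then the image of det(a_{ij}) in the local quotient ring Q = k[x₁,…,x_r]_{(x₁,…,x_r)}/⟨f₁,…,f_r⟩ is independent of the choice of the a_{ij} with f_i = Σ_j a_{ij} x_j. -/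
/-!
If `A x = A' x`, each row of `A' - A` is a syzygy of `x = (x₁, …, x_r)`, and since the variables
form a regular sequence every such syzygy is Koszul: `w_j = Σ_p (c_pj - c_jp) x_p`. Replacing one
row of `A` by a Koszul syzygy gives the determinant `Σ_{p,j} c_pj (x_p C_j - x_j C_p)`, where the
`C_j` are the cofactors along that row, and Cramer's rule puts each `x_p C_j - x_j C_p` in the
ideal generated by the other entries of `A x`. Changing the rows one at a time shows
`det A' ≡ det A` modulo `(A x) = (f)` already in `k[x₁, …, x_r]`, hence in `Q`.
-/

section KoszulSyzygies

variable {S T ι : Type*} [CommRing S] [CommRing T] [Fintype ι]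

def HasKoszulSyzygies (x : ι → S) : Prop :=
  ∀ w : ι → S, ∑ j, w j * x j = 0 → ∃ c : ι → ι → S, ∀ j, w j = ∑ p, (c p j - c j p) * x p

theorem HasKoszulSyzygies.comp_ringEquiv {x : ι → S}
    (hx : HasKoszulSyzygies x) (e : S ≃+* T) : HasKoszulSyzygies (e ∘ x) := by
  intro w hw
  obtain ⟨c, hc⟩ := hx (e.symm ∘ w) <| by
    simpa [map_sum] using congrArg e.symm hw
  refine ⟨fun p q => e (c p q), fun j => ?_⟩
  simpa [map_sum] using congrArg e (hc j)

theorem hasKoszulSyzygies_of_isEmpty [IsEmpty ι] (x : ι → S) :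
    HasKoszulSyzygies x :=
  fun _ _ => ⟨0, isEmptyElim⟩

open Polynomial in
theorem HasKoszulSyzygies.polynomial_cons {n : ℕ} {x : Fin n → S} (hx : HasKoszulSyzygies x) :
    HasKoszulSyzygies (Fin.cons X (C ∘ x) : Fin (n + 1) → S[X]) := by
  intro w hw
  simp only [Fin.sum_univ_succ, Fin.cons_zero, Fin.cons_succ, Function.comp_apply] at hw
  set U : Fin n → S := fun i => (w i.succ).coeff 0
  set V : Fin n → S[X] := fun i => (w i.succ).divX
  have hw_succ : ∀ i, w i.succ = V i * X + C (U i) := fun i => (divX_mul_X_add _).symm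
  have hU : ∑ i, U i * x i = 0 := by
    simpa [mul_coeff_zero, finsetSum_coeff] using congrArg (coeff · 0) hw
  have hw_zero : w 0 = -∑ i, V i * C (x i) := by
    refine isRegular_X.right (a₁ := w 0) ?_
    have hsum : ∑ i, w i.succ * C (x i) = (∑ i, V i * C (x i)) * X := by
      simp_rw [hw_succ, add_mul, Finset.sum_add_distrib, ← C_mul, ← map_sum, hU, map_zero,
        add_zero, Finset.sum_mul, mul_right_comm]
    simp only [neg_mul, ← hsum]
    exact eq_neg_of_add_eq_zero_left hw
  obtain ⟨c, hc⟩ := hx U hU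
  refine ⟨Fin.cons (Fin.cons 0 V) fun p => Fin.cons 0 fun q => C (c p q), fun j => ?_⟩
  refine Fin.cases ?_ (fun q => ?_) j
  · simp [Fin.sum_univ_succ, hw_zero]
  · simp [Fin.sum_univ_succ, hw_succ q, hc q, map_sum]

end KoszulSyzygies

namespace MvPolynomial

theorem hasKoszulSyzygies_X (S : Type*) [CommRing S] (n : ℕ) :
    HasKoszulSyzygies (X : Fin n → MvPolynomial (Fin n) S) := by
  induction n with
  | zero => exact hasKoszulSyzygies_of_isEmpty _
  | succ n ih =>
    convert (ih.polynomial_cons).comp_ringEquiv (finSuccEquiv S n).symm.toRingEquiv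
    funext j
    refine Fin.cases ?_ (fun i => ?_) j
    · simp [← finSuccEquiv_X_zero]
    · simp [← finSuccEquiv_X_succ]

end MvPolynomial

namespace Matrix

variable {S ι : Type*} [CommRing S] [Fintype ι] [DecidableEq ι]

theorem adjugate_updateRow_apply_self (A : Matrix ι ι S) (i p : ι) (v : ι → S) :
    (A.updateRow i v).adjugate p i = A.adjugate p i := by
  rw [adjugate_apply, adjugate_apply, updateRow_idem]

theorem det_updateRow_eq_sum_mul_adjugate (A : Matrix ι ι S) (i : ι) (v : ι → S) :
    (A.updateRow i v).det = ∑ j, v j * A.adjugate j i := by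
  simp [det_eq_sum_mul_adjugate_row _ i, adjugate_updateRow_apply_self]

theorem det_mul_sub_adjugate_mul_mem_span (N : Matrix ι ι S) (x : ι → S) (i p : ι) :
    N.det * x p - N.adjugate p i * (N *ᵥ x) i ∈ Ideal.span ((N *ᵥ x) '' {i}ᶜ) := by
  have h : N.det * x p = ∑ l, N.adjugate p l * (N *ᵥ x) l := by
    calc N.det * x p = ((N.adjugate * N) *ᵥ x) p := by
          rw [adjugate_mul, smul_mulVec, one_mulVec, Pi.smul_apply, smul_eq_mul]
      _ = ∑ l, N.adjugate p l * (N *ᵥ x) l := by rw [← mulVec_mulVec]; rfl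
  rw [h, ← Finset.add_sum_erase _ _ (Finset.mem_univ i), add_sub_cancel_left]
  refine Ideal.sum_mem _ fun l hl => Ideal.mul_mem_left _ _ (Ideal.subset_span ⟨l, ?_, rfl⟩)
  simpa using Finset.ne_of_mem_erase hl

theorem mul_adjugate_sub_mul_adjugate_mem_span (B : Matrix ι ι S) (x : ι → S) (i p q : ι) :
    x p * B.adjugate q i - x q * B.adjugate p i ∈ Ideal.span ((B *ᵥ x) '' {i}ᶜ) := by
  -- Apply the previous lemma to `B` with row `i` replaced by `e_q`: its determinant is `adj B q i`.
  have h := det_mul_sub_adjugate_mul_mem_span (B.updateRow i (Pi.single q 1)) x i p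
  rw [← adjugate_apply, adjugate_updateRow_apply_self, updateRow_mulVec, Function.update_self,
    single_one_dotProduct,
    Set.image_congr (s := {i}ᶜ) (g := B *ᵥ x) fun l hl => Function.update_of_ne hl _ _] at h
  rwa [mul_comm (x p), mul_comm (x q)]

theorem det_updateRow_mem_span_of_koszul (B : Matrix ι ι S) (x : ι → S) (i : ι)
    (c : ι → ι → S) : (B.updateRow i fun j => ∑ p, (c p j - c j p) * x p).det ∈
      Ideal.span ((B *ᵥ x) '' {i}ᶜ) := by
  rw [det_updateRow_eq_sum_mul_adjugate]
  have h : ∑ j, (∑ p, (c p j - c j p) * x p) * B.adjugate j i =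
      ∑ j, ∑ p, c p j * (x p * B.adjugate j i - x j * B.adjugate p i) := by
    simp only [Finset.sum_mul, mul_sub, sub_mul, Finset.sum_sub_distrib]
    congr 1
    · simp_rw [mul_assoc]
    · rw [Finset.sum_comm]
      simp_rw [mul_assoc]
  rw [h]
  exact Ideal.sum_mem _ fun j _ => Ideal.sum_mem _ fun p _ =>
    Ideal.mul_mem_left _ _ (mul_adjugate_sub_mul_adjugate_mem_span B x i p j)

theorem det_sub_det_mem_span_of_mulVec_eq {x : ι → S} (hx : HasKoszulSyzygies x)
    {A A' : Matrix ι ι S} (h : A *ᵥ x = A' *ᵥ x) :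
    A'.det - A.det ∈ Ideal.span (Set.range (A *ᵥ x)) := by
  let M (s : Finset ι) : Matrix ι ι S := of fun l => if l ∈ s then A' l else A l
  suffices ∀ s, (M s).det - A.det ∈ Ideal.span (Set.range (A *ᵥ x)) by
    simpa [show M Finset.univ = A' by ext; simp [M]] using this Finset.univ
  intro s
  induction s using Finset.induction with
  | empty => simp [show M ∅ = A by ext; simp [M]]
  | insert i s hi ih =>
    have hM : M s *ᵥ x = A *ᵥ x := by
      ext l
      by_cases hl : l ∈ s
      · simpa [M, mulVec, hl] using (congrFun h l).symm
      · simp [M, mulVec, hl]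
    have hsyz : ∑ j, (A' i - A i) j * x j = 0 := by
      simpa [sub_mul, sub_eq_zero, mulVec, dotProduct] using congrFun h.symm i
    obtain ⟨c, hc⟩ := hx _ hsyz
    have hstep : (M (insert i s)).det = (M s).det + ((M s).updateRow i (A' i - A i)).det := by
      have hMi : M s i = A i := by ext; simp [M, hi]
      have hins : M (insert i s) = (M s).updateRow i (M s i + (A' i - A i)) := by
        rw [hMi, add_sub_cancel]
        ext l j
        by_cases hl : l = i <;> simp [M, hl, updateRow_apply]
      rw [hins, det_updateRow_add, updateRow_eq_self]
    have hrow : ((M s).updateRow i (A' i - A i)).det ∈ Ideal.span (Set.range (A *ᵥ x)) := by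
      rw [show A' i - A i = _ from funext hc, ← hM]
      exact Ideal.span_mono (Set.image_subset_range _ _)
        (det_updateRow_mem_span_of_koszul (M s) x i c)
    rw [hstep, add_sub_right_comm]
    exact add_mem ih hrow

end Matrix

open MvPolynomial

/-- The maximal ideal `(x₁, …, x_r)` of `k[x₁, …, x_r]` corresponding to the origin. -/
noncomputable def originIdeal (k : Type) [Field k] (r : ℕ) : Ideal (MvPolynomial (Fin r) k) :=
  Ideal.span (Set.range (X : Fin r → MvPolynomial (Fin r) k))

theorem stmt13_general (k : Type) [Field k] (r : ℕ)
    (f : Fin r → MvPolynomial (Fin r) k)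
    (a a' : Fin r → Fin r → MvPolynomial (Fin r) k)
    (ha : ∀ i, f i = ∑ j, a i j * X j)
    (ha' : ∀ i, f i = ∑ j, a' i j * X j)
    [hp : (originIdeal k r).IsPrime] :
    Ideal.Quotient.mk
        (Ideal.map
          (algebraMap (MvPolynomial (Fin r) k) (Localization.AtPrime (originIdeal k r)))
          (Ideal.span (Set.range f)))
        (algebraMap (MvPolynomial (Fin r) k) (Localization.AtPrime (originIdeal k r))
          (Matrix.det (Matrix.of a))) =
      Ideal.Quotient.mk
        (Ideal.map
          (algebraMap (MvPolynomial (Fin r) k) (Localization.AtPrime (originIdeal k r)))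
          (Ideal.span (Set.range f)))
        (algebraMap (MvPolynomial (Fin r) k) (Localization.AtPrime (originIdeal k r))
          (Matrix.det (Matrix.of a'))) := by
  have hmulVec (b : Fin r → Fin r → MvPolynomial (Fin r) k) (hb : ∀ i, f i = ∑ j, b i j * X j) :
      (Matrix.of b).mulVec X = f :=
    funext fun i => (hb i).symm
  have hdet := Matrix.det_sub_det_mem_span_of_mulVec_eq (hasKoszulSyzygies_X k r)
    ((hmulVec a' ha').trans (hmulVec a ha).symm)
  rw [hmulVec a' ha'] at hdet
  rw [Ideal.Quotient.eq, ← map_sub]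
  exact Ideal.mem_map_of_mem _ hdet

/-- Let `σ : 𝔸ʳ → 𝔸ʳ` have coordinate functions `fᵢ = Σⱼ aᵢⱼ xⱼ`, with the origin an
isolated zero of `σ` (the local quotient ring `Q = k[x]_{(x)}/⟨f⟩` is finite, expressed by
saying a power of the maximal ideal of the localization is contained in `⟨f⟩`).  Then the
image of `det (aᵢⱼ)` in `Q` is independent of the choice of `aᵢⱼ` with `fᵢ = Σⱼ aᵢⱼ xⱼ`. -/
theorem stmt13 (k : Type) [Field k] (r : ℕ)
    (f : Fin r → MvPolynomial (Fin r) k)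
    (a a' : Fin r → Fin r → MvPolynomial (Fin r) k)
    (ha : ∀ i, f i = ∑ j, a i j * X j)
    (ha' : ∀ i, f i = ∑ j, a' i j * X j)
    [hp : (originIdeal k r).IsPrime]
    (hiso : ∃ m : ℕ,
      (Ideal.map
          (algebraMap (MvPolynomial (Fin r) k) (Localization.AtPrime (originIdeal k r)))
          (originIdeal k r)) ^ m ≤
        Ideal.map
          (algebraMap (MvPolynomial (Fin r) k) (Localization.AtPrime (originIdeal k r)))
          (Ideal.span (Set.range f))) :
    Ideal.Quotient.mk
        (Ideal.map
          (algebraMap (MvPolynomial (Fin r) k) (Localization.AtPrime (originIdeal k r)))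
          (Ideal.span (Set.range f)))
        (algebraMap (MvPolynomial (Fin r) k) (Localization.AtPrime (originIdeal k r))
          (Matrix.det (Matrix.of a))) =
      Ideal.Quotient.mk
        (Ideal.map
          (algebraMap (MvPolynomial (Fin r) k) (Localization.AtPrime (originIdeal k r)))
          (Ideal.span (Set.range f)))
        (algebraMap (MvPolynomial (Fin r) k) (Localization.AtPrime (originIdeal k r))
          (Matrix.det (Matrix.of a'))) :=
  stmt13_general k r f a a' ha ha' (hp := hp)
end
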